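/- Let 1/3 < γ < 1, c_γ = (1−γ)·(2γ)^{γ/(1−γ)}, f(s) = c_γ·s^{2γ/(γ−1)}, let α₁, α₂ satisfy (1−γ)/(2γ) < α₁ < min(1, (1−γ)/γ) and 0 < α₂ < min(2γα₁/(1−γ) − 1, 1/3), and set g(s) = (εs)² + (ε²f(s))² and s̃ = ( 2γ·c_γ²·ε²/(1−γ) )^{(1−γ)/(2(γ+1))}. Then there exists ε₀ ∈ (0,1) such that for all ε ∈ (0, ε₀): ε^{α₁} ≤ s̃ ≤ ε^{−α₂}, and for every s' ∈ [s̃, ε^{−α₂}] there exists s ∈ [ε^{α₁}, s̃] with g(s) = g(s'). Equivalently, every point of Γ(s̃, ε^{−α₂}) can be carried into Γ(ε^{α₁}, s̃) by a rotation of the plane about the origin. -/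

import Mathlib

/-!
With `q = 2γ/(γ-1) < 0` we have `g(s) = ε²s² + ε⁴c_γ²s^{2q}`, whose derivative vanishes exactly at
`s̃`, so `g` increases on `[s̃, ∞)` and `g(s̃) ≤ g(s') ≤ g(ε^{-α₂})` for `s' ∈ [s̃, ε^{-α₂}]`.
Both terms of `g(ε^{-α₂})` are of strictly higher order in `ε` than the term `c_γ²ε^{4+2qα₁}` of
`g(ε^{α₁})`; this is where the conditions on `α₁, α₂` enter. Hence `g(ε^{-α₂}) ≤ g(ε^{α₁})` for
small `ε`, and the intermediate value theorem on `[ε^{α₁}, s̃]` produces `s`. The bounds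
`ε^{α₁} ≤ s̃ ≤ ε^{-α₂}` compare powers of `ε`, as `s̃` is a constant times `ε^{(1-γ)/(1+γ)}`.
-/

open Set Filter Topology

theorem exists_Ioo_forall_of_eventually_nhdsGT {P : ℝ → Prop} {b : ℝ} (hb : 0 < b)
    (h : ∀ᶠ ε in 𝓝[>] 0, P ε) : ∃ ε₀ ∈ Ioo 0 b, ∀ ε, 0 < ε → ε < ε₀ → P ε := by
  obtain ⟨u, hu, hsub⟩ := (mem_nhdsGT_iff_exists_mem_Ioc_Ioo_subset (half_pos hb)).1 h
  exact ⟨u, ⟨hu.1, hu.2.trans_lt (half_lt_self hb)⟩, fun ε hε hεu => hsub ⟨hε, hεu⟩⟩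

theorem eventually_mul_rpow_le_mul_rpow (C : ℝ) {D a b : ℝ} (hD : 0 < D) (hba : b < a) :
    ∀ᶠ ε in 𝓝[>] 0, C * ε ^ a ≤ D * ε ^ b := by
  have hlim : Tendsto (fun ε : ℝ => C * ε ^ (a - b)) (𝓝[>] 0) (𝓝 0) := by
    have := (Real.continuousAt_rpow_const 0 (a - b) (Or.inr (sub_pos.2 hba).le)).tendsto
    rw [Real.zero_rpow (sub_pos.2 hba).ne'] at this
    simpa using (this.const_mul C).mono_left nhdsWithin_le_nhds
  filter_upwards [hlim.eventually (gt_mem_nhds hD), self_mem_nhdsWithin] with ε hε hε0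
  calc C * ε ^ a = C * ε ^ (a - b) * ε ^ b := by
        rw [mul_assoc, ← Real.rpow_add hε0, sub_add_cancel]
    _ ≤ D * ε ^ b := by gcongr; exact Real.rpow_nonneg (le_of_lt hε0) b

theorem monotoneOn_mul_sq_add_mul_rpow {a b r t : ℝ} (ha : 0 ≤ a) (hr : r ≤ 2) (ht : 0 < t)
    (hcrit : -(r * b) ≤ 2 * a * t ^ (2 - r)) :
    MonotoneOn (fun x => a * x ^ 2 + b * x ^ r) (Ici t) := by
  have hderiv : ∀ x, 0 < x →
      HasDerivAt (fun x => a * x ^ 2 + b * x ^ r) (a * (2 * x) + b * (r * x ^ (r - 1))) x :=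
    fun x hx => (((hasDerivAt_pow 2 x).const_mul a).add
      ((Real.hasDerivAt_rpow_const (p := r) (Or.inl hx.ne')).const_mul b)).congr_deriv
        (by push_cast; ring)
  refine monotoneOn_of_hasDerivWithinAt_nonneg (convex_Ici t)
    (fun x hx => (hderiv x (ht.trans_le hx)).continuousAt.continuousWithinAt)
    (fun x hx => (hderiv x (ht.trans (by simpa using hx))).hasDerivWithinAt) fun x hx => ?_
  rw [interior_Ici] at hx
  have hx0 : 0 < x := ht.trans hx
  have hsplit : x = x ^ (r - 1) * x ^ (2 - r) := by
    rw [← Real.rpow_add hx0]; norm_num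
  have hpow : 2 * a * t ^ (2 - r) ≤ 2 * a * x ^ (2 - r) := by
    gcongr
    exact le_of_lt hx
  calc 0 ≤ x ^ (r - 1) * (2 * a * x ^ (2 - r) + r * b) :=
        mul_nonneg (Real.rpow_nonneg hx0.le _) (by linarith)
    _ = a * (2 * x) + b * (r * x ^ (r - 1)) := by nth_rw 3 [hsplit]; ring

theorem exists_mem_Icc_eq_of_monotoneOn {G : ℝ → ℝ} {l t u : ℝ} (hlt : l ≤ t)
    (hcont : ContinuousOn G (Icc l t)) (hmono : MonotoneOn G (Ici t)) (hul : G u ≤ G l)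
    {y : ℝ} (hy : y ∈ Icc t u) : ∃ x ∈ Icc l t, G x = G y :=
  intermediate_value_Icc' hlt hcont
    ⟨hmono self_mem_Ici hy.1 hy.1, (hmono hy.1 (hy.1.trans hy.2) hy.2).trans hul⟩

/-- The function `g` of the statement, for `f(s) = c s^q`. -/
noncomputable def curveSqNorm (c q ε s : ℝ) : ℝ := (ε * s) ^ 2 + (ε ^ 2 * (c * s ^ q)) ^ 2

section curveSqNorm

variable {c q ε : ℝ}

theorem curveSqNorm_eq {s : ℝ} (hs : 0 ≤ s) :
    curveSqNorm c q ε s = ε ^ 2 * s ^ 2 + ε ^ 4 * c ^ 2 * s ^ (2 * q) := by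
  have hsq : s ^ (2 * q) = (s ^ q) ^ 2 := by
    rw [mul_comm]; exact_mod_cast Real.rpow_mul_natCast hs q 2
  rw [curveSqNorm, hsq]
  ring

theorem curveSqNorm_rpow (hε : 0 < ε) (e : ℝ) :
    curveSqNorm c q ε (ε ^ e) = ε ^ (2 + 2 * e) + c ^ 2 * ε ^ (4 + 2 * q * e) := by
  have hsq : (ε ^ e) ^ 2 = ε ^ (2 * e) := by
    rw [mul_comm]; exact_mod_cast (Real.rpow_mul_natCast hε.le e 2).symm
  rw [curveSqNorm_eq (Real.rpow_nonneg hε.le e), ← Real.rpow_mul hε.le, mul_comm e, hsq,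
    Real.rpow_add hε, Real.rpow_add hε, Real.rpow_ofNat, Real.rpow_ofNat]
  ring

theorem continuousOn_curveSqNorm : ContinuousOn (curveSqNorm c q ε) (Ioi 0) :=
  (continuousOn_const.mul continuousOn_id).pow 2 |>.add <|
    (continuousOn_const.mul <| continuousOn_const.mul <|
      continuousOn_id.rpow_const fun _ hx => Or.inl (ne_of_gt hx)).pow 2

theorem monotoneOn_curveSqNorm {t : ℝ} (hq : q < 0) (ht : 0 < t)
    (hcrit : -q * c ^ 2 * ε ^ 2 ≤ t ^ (2 - 2 * q)) :
    MonotoneOn (curveSqNorm c q ε) (Ici t) := by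
  refine (monotoneOn_mul_sq_add_mul_rpow (sq_nonneg ε) (by linarith) ht ?_).congr
    fun x hx => (curveSqNorm_eq (ht.le.trans hx)).symm
  linear_combination (2 * ε ^ 2) * hcrit

theorem eventually_curveSqNorm_rpow_le {e₁ e₂ : ℝ} (hc : c ≠ 0)
    (h₁ : 4 + 2 * q * e₁ < 2 + 2 * e₂) (h₂ : q * e₁ < q * e₂) :
    ∀ᶠ ε in 𝓝[>] 0, curveSqNorm c q ε (ε ^ e₂) ≤ curveSqNorm c q ε (ε ^ e₁) := by
  have hc2 : 0 < c ^ 2 / 2 := by positivity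
  filter_upwards [eventually_mul_rpow_le_mul_rpow 1 hc2 h₁,
    eventually_mul_rpow_le_mul_rpow (c ^ 2) hc2 (by linarith : 4 + 2 * q * e₁ < 4 + 2 * q * e₂),
    self_mem_nhdsWithin] with ε hfirst hsecond hε
  rw [curveSqNorm_rpow hε, curveSqNorm_rpow hε]
  have := Real.rpow_nonneg (le_of_lt hε) (2 + 2 * e₁)
  linarith

theorem exists_curveSqNorm_eq {l t u s' : ℝ} (hq : q < 0) (hl : 0 < l) (hlt : l ≤ t)
    (hcrit : -q * c ^ 2 * ε ^ 2 ≤ t ^ (2 - 2 * q))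
    (hul : curveSqNorm c q ε u ≤ curveSqNorm c q ε l) (hs' : s' ∈ Icc t u) :
    ∃ s ∈ Icc l t, curveSqNorm c q ε s = curveSqNorm c q ε s' :=
  exists_mem_Icc_eq_of_monotoneOn hlt
    (continuousOn_curveSqNorm.mono fun _ hx => hl.trans_le hx.1)
    (monotoneOn_curveSqNorm hq (hl.trans_le hlt) hcrit) hul hs'

/-- `(-q c² ε²)^{1/(2-2q)}` is the critical point `s̃` of `curveSqNorm c q ε`. -/
theorem eventually_exists_curveSqNorm_eq {e₁ e₂ : ℝ} (hq : q < 0) (hc : c ≠ 0)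
    (he₁ : (1 - q)⁻¹ < e₁) (he₂ : e₂ < (1 - q)⁻¹) (he : 2 + q * e₁ < 1 + e₂) :
    ∀ᶠ ε in 𝓝[>] 0,
      ε ^ e₁ ≤ (-q * c ^ 2 * ε ^ 2) ^ (2 - 2 * q)⁻¹ ∧
      (-q * c ^ 2 * ε ^ 2) ^ (2 - 2 * q)⁻¹ ≤ ε ^ e₂ ∧
      ∀ s' ∈ Icc ((-q * c ^ 2 * ε ^ 2) ^ (2 - 2 * q)⁻¹) (ε ^ e₂),
        ∃ s ∈ Icc (ε ^ e₁) ((-q * c ^ 2 * ε ^ 2) ^ (2 - 2 * q)⁻¹),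
          curveSqNorm c q ε s = curveSqNorm c q ε s' := by
  have hK : 0 < -q * c ^ 2 := mul_pos (neg_pos.2 hq) (by positivity)
  have hsplit : ∀ ε, 0 < ε → (-q * c ^ 2 * ε ^ 2) ^ (2 - 2 * q)⁻¹ =
      (-q * c ^ 2) ^ (2 - 2 * q)⁻¹ * ε ^ (1 - q)⁻¹ := fun ε hε => by
    rw [Real.mul_rpow hK.le (sq_nonneg ε), ← Real.rpow_natCast_mul hε.le]
    congr 2
    push_cast
    field_simp
  filter_upwards [eventually_mul_rpow_le_mul_rpow 1 (Real.rpow_pos_of_pos hK _) he₁,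
    eventually_mul_rpow_le_mul_rpow ((-q * c ^ 2) ^ (2 - 2 * q)⁻¹) one_pos he₂,
    eventually_curveSqNorm_rpow_le (e₁ := e₁) hc (by linear_combination 2 * he)
      (mul_lt_mul_of_neg_left (he₂.trans he₁) hq),
    self_mem_nhdsWithin] with ε hlow hhigh hcmp hε
  have hcrit := Real.rpow_inv_rpow (by positivity : 0 ≤ -q * c ^ 2 * ε ^ 2)
    (by linarith only [hq] : 0 < 2 - 2 * q).ne'
  rw [one_mul, ← hsplit ε hε] at hlow
  rw [one_mul, ← hsplit ε hε] at hhigh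
  exact ⟨hlow, hhigh, fun s' hs' =>
    exists_curveSqNorm_eq hq (Real.rpow_pos_of_pos hε e₁) hlow hcrit.ge hcmp hs'⟩

end curveSqNorm

theorem inv_one_sub_two_mul_div_sub_one {γ : ℝ} (h : γ ≠ 1) :
    (1 - 2 * γ / (γ - 1))⁻¹ = (1 - γ) / (1 + γ) := by
  have : γ - 1 ≠ 0 := sub_ne_zero.2 h
  have : 1 - γ ≠ 0 := sub_ne_zero.2 h.symm
  rw [inv_eq_iff_eq_inv, inv_div]
  field_simp
  ring

theorem statement_14_general (γ cγ α₁ α₂ : ℝ) (hγ₁ : 1/3 < γ) (hγ₂ : γ < 1)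
    (hcγ : cγ = (1 - γ) * (2*γ) ^ (γ/(1-γ)))
    (f : ℝ → ℝ) (hf : ∀ s : ℝ, 0 < s → f s = cγ * s ^ (2*γ/(γ-1)))
    (hα₁ : (1-γ)/(2*γ) < α₁)
    (hα₂ : 0 < α₂) (hα₂' : α₂ < min (2*γ*α₁/(1-γ) - 1) (1/3)) :
    ∃ ε₀ ∈ Ioo (0:ℝ) 1, ∀ ε : ℝ, 0 < ε → ε < ε₀ →
      ε ^ α₁ ≤ (2*γ*cγ^2*ε^2/(1-γ)) ^ ((1-γ)/(2*(γ+1))) ∧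
      (2*γ*cγ^2*ε^2/(1-γ)) ^ ((1-γ)/(2*(γ+1))) ≤ ε ^ (-α₂) ∧
      ∀ s' ∈ Icc ((2*γ*cγ^2*ε^2/(1-γ)) ^ ((1-γ)/(2*(γ+1)))) (ε ^ (-α₂)),
        ∃ s ∈ Icc (ε ^ α₁) ((2*γ*cγ^2*ε^2/(1-γ)) ^ ((1-γ)/(2*(γ+1)))),
          (ε*s)^2 + (ε^2 * f s)^2 = (ε*s')^2 + (ε^2 * f s')^2 := by
  have hγ : 0 < γ := by linarith
  have h1γ : 0 < 1 - γ := by linarith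
  have hc : 0 < cγ := hcγ ▸ mul_pos h1γ (Real.rpow_pos_of_pos (by linarith) _)
  set q := 2*γ/(γ-1) with hq_def
  have hq : q < 0 := div_neg_of_pos_of_neg (by linarith) (by linarith)
  have h1q : (1 - q)⁻¹ = (1-γ)/(1+γ) := inv_one_sub_two_mul_div_sub_one hγ₂.ne
  have hβ : (1-γ)/(2*(γ+1)) = (2 - 2*q)⁻¹ := by
    rw [show 2 - 2*q = 2*(1-q) by ring, mul_inv, h1q, add_comm γ]; field_simp
  have hnegq : -q = 2*γ/(1-γ) := by rw [hq_def, ← div_neg, neg_sub]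
  have hK : ∀ ε, 2*γ*cγ^2*ε^2/(1-γ) = -q * cγ^2 * ε^2 := fun ε => by rw [hnegq]; ring
  have he₁ : (1 - q)⁻¹ < α₁ := h1q ▸ lt_of_le_of_lt
    (div_le_div_of_nonneg_left h1γ.le (by positivity) (by linarith)) hα₁
  have he : 2 + q*α₁ < 1 + -α₂ := by
    have hqα : 2*γ*α₁/(1-γ) = -q*α₁ := by rw [hnegq]; ring
    linarith [hqα ▸ lt_of_lt_of_le hα₂' (min_le_left _ _)]
  obtain ⟨ε₀, hε₀, H⟩ := exists_Ioo_forall_of_eventually_nhdsGT one_pos <|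
    eventually_exists_curveSqNorm_eq hq hc.ne' he₁
      (by rw [h1q]; linarith [div_pos h1γ (by linarith : (0:ℝ) < 1 + γ)]) he
  refine ⟨ε₀, hε₀, fun ε hε hεε₀ => ?_⟩
  obtain ⟨hlow, hhigh, hrot⟩ := H ε hε hεε₀
  rw [hK, hβ]
  refine ⟨hlow, hhigh, fun s' hs' => ?_⟩
  obtain ⟨s, hs, heq⟩ := hrot s' hs'
  have hpos : 0 < ε ^ α₁ := Real.rpow_pos_of_pos hε α₁
  refine ⟨s, hs, ?_⟩
  rw [hf s (hpos.trans_le hs.1), hf s' (hpos.trans_le (hlow.trans hs'.1))]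
  exact heq

/-- Under the parameter conditions on `α₁, α₂`, with
`g(s) = (εs)² + (ε²f(s))²` and `s̃ = (2γc_γ²ε²/(1−γ))^{(1−γ)/(2(γ+1))}`, there is
`ε₀ ∈ (0,1)` such that for all `ε ∈ (0, ε₀)` one has `ε^{α₁} ≤ s̃ ≤ ε^{−α₂}` and every
point of `Γ(s̃, ε^{−α₂})` can be carried into `Γ(ε^{α₁}, s̃)` by a rotation about the
origin, i.e. for every `s' ∈ [s̃, ε^{−α₂}]` there exists `s ∈ [ε^{α₁}, s̃]` with
`g(s) = g(s')`. -/
theorem statement_14 (γ cγ α₁ α₂ : ℝ) (hγ₁ : 1/3 < γ) (hγ₂ : γ < 1)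
    (hcγ : cγ = (1 - γ) * (2*γ) ^ (γ/(1-γ)))
    (f : ℝ → ℝ) (hf : ∀ s : ℝ, 0 < s → f s = cγ * s ^ (2*γ/(γ-1)))
    (hα₁ : (1-γ)/(2*γ) < α₁) (hα₁' : α₁ < min 1 ((1-γ)/γ))
    (hα₂ : 0 < α₂) (hα₂' : α₂ < min (2*γ*α₁/(1-γ) - 1) (1/3)) :
    ∃ ε₀ ∈ Ioo (0:ℝ) 1, ∀ ε : ℝ, 0 < ε → ε < ε₀ →
      ε ^ α₁ ≤ (2*γ*cγ^2*ε^2/(1-γ)) ^ ((1-γ)/(2*(γ+1))) ∧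
      (2*γ*cγ^2*ε^2/(1-γ)) ^ ((1-γ)/(2*(γ+1))) ≤ ε ^ (-α₂) ∧
      ∀ s' ∈ Icc ((2*γ*cγ^2*ε^2/(1-γ)) ^ ((1-γ)/(2*(γ+1)))) (ε ^ (-α₂)),
        ∃ s ∈ Icc (ε ^ α₁) ((2*γ*cγ^2*ε^2/(1-γ)) ^ ((1-γ)/(2*(γ+1)))),
          (ε*s)^2 + (ε^2 * f s)^2 = (ε*s')^2 + (ε^2 * f s')^2 :=
  statement_14_general γ cγ α₁ α₂ hγ₁ hγ₂ hcγ f hf hα₁ hα₂ hα₂'
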